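/- There exist a binary vector x = (x_{ijkq}) satisfying the feasibility constraints (2)–(5) and nonnegative reals y_{ijkℓ} (i ∈ [n], j ∈ [3], k ∈ [s], ℓ ∈ [m]) satisfying (7) y_{ijkℓ} ≥ Σ_{w∈[3]} x_{ijkw} + Σ_{(α,q)∈T(ℓ)} x_{αjkq} − 1 for all i, j, k, ℓ, and (8) Σ_{j∈[3]} Σ_{k∈[s]} y_{ijkℓ} ≤ 1 for every team i and every problem index ℓ, if and only if there exists a strongly fair schedule. -/

import Mathlib

/-!
A solution `x` of (2)–(5) is the incidence vector of a schedule: (3) picks, for each team `t`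
and round `j`, one room `φ j t` and one slot `σ t j` of the portfolio, (2) makes every `σ t` a
permutation of the portfolio, (4) counts room sizes and (5) forbids a problem to be presented
twice in one room. Given (5), constraint (7) forces `y t j (φ j t) ℓ ≥ 1` exactly when `ℓ` is
presented in the room of `t` in round `j`, so (8) says that the three problem sets seen by `t`
are pairwise disjoint; as each has `size` elements, this is strong fairness. Conversely, the
0/1 vector of these memberships is a feasible `y`.
-/

open Finset Function

theorem Finset.exists_eq_ite_of_sum_eq_one {α : Type*} [Fintype α] [DecidableEq α]
    {f : α → ℕ} (h : ∑ a, f a = 1) : ∃ a, ∀ b, f b = if b = a then 1 else 0 := by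
  obtain ⟨a, -, ha⟩ := exists_ne_zero_of_sum_ne_zero (h ▸ one_ne_zero)
  have hsplit := add_sum_erase univ f (mem_univ a)
  have hrest : ∑ b ∈ univ.erase a, f b = 0 := by omega
  refine ⟨a, fun b => ?_⟩
  split_ifs with hb
  · subst hb; omega
  · exact sum_eq_zero_iff.mp hrest b (mem_erase.mpr ⟨hb, mem_univ b⟩)

theorem Function.bijective_iff_card_fiber_eq_one {α β : Type*} [Fintype α] [DecidableEq β]
    {f : α → β} : Bijective f ↔ ∀ b, #{a | f a = b} = 1 := by
  simp only [bijective_iff_existsUnique, card_eq_one, eq_singleton_iff_unique_mem, mem_filter,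
    mem_univ, true_and, ExistsUnique]

theorem Finset.image_univ_eq_iff_exists_bijective_comp_eq {ι α : Type*} [Fintype ι]
    [DecidableEq α] {f g : ι → α} (hg : Injective g) :
    univ.image f = univ.image g ↔ ∃ σ : ι → ι, Bijective σ ∧ ∀ j, g (σ j) = f j := by
  constructor
  · intro h
    have hmem : ∀ j, ∃ q, g q = f j := fun j => by
      simpa [h] using mem_image_of_mem f (mem_univ j)
    choose σ hσ using hmem
    have hf : Injective f := by
      rw [← Set.injOn_univ, ← coe_univ, ← card_image_iff, h, card_image_of_injective _ hg]
    refine ⟨σ, Finite.injective_iff_bijective.mp fun j j' hjj' => hf ?_, hσ⟩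
    rw [← hσ, ← hσ, hjj']
  · rintro ⟨σ, hσ, hf⟩
    classical
    rw [show f = g ∘ σ from funext fun j => (hf j).symm, ← image_image,
      image_univ_of_surjective hσ.2]

theorem Finset.image_univ_fin_three {α : Type*} [DecidableEq α] (f : Fin 3 → α) :
    univ.image f = {f 0, f 1, f 2} := by
  ext; simp [Fin.exists_fin_succ, eq_comm]

theorem Finset.card_biUnion_univ_eq_sum_card_iff {ι α : Type*} [Fintype ι] [DecidableEq ι]
    [DecidableEq α] (S : ι → Finset α) :
    #(univ.biUnion S) = ∑ j, #(S j) ↔ ∀ a, #{j | a ∈ S j} ≤ 1 := by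
  have hpos : ∀ a ∈ univ.biUnion S, 1 ≤ #{j | a ∈ S j} := fun a ha => by
    simpa [card_pos, filter_nonempty_iff] using ha
  rw [sum_card_eq_sum_biUnion_card, card_eq_sum_ones]
  simp only [mem_univ, true_and]
  rw [sum_eq_sum_iff_of_le hpos]
  refine ⟨fun h a => ?_, fun h a ha => le_antisymm (hpos a ha) (h a)⟩
  by_cases ha : a ∈ univ.biUnion S
  · exact (h a ha).ge
  · simp_all

theorem Fin.union_three_eq_biUnion {α : Type*} [DecidableEq α] (S : Fin 3 → Finset α) :
    S 0 ∪ S 1 ∪ S 2 = univ.biUnion S := by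
  ext; simp [Fin.exists_fin_succ]

section ScheduleIndicator

variable {T J R Q P : Type*} [DecidableEq R] [DecidableEq Q]

/-- `scheduleIndicator φ σ t j r q = 1` iff team `t` presents the `q`-th problem of its portfolio
in room `r` in round `j`; this is the ILP vector `x` of the schedule. -/
def scheduleIndicator (φ : J → T → R) (σ : T → J → Q) : T → J → R → Q → ℕ :=
  fun t j r q => if φ j t = r ∧ σ t j = q then 1 else 0

theorem exists_eq_scheduleIndicator [Fintype R] [Fintype Q] {x : T → J → R → Q → ℕ}
    (h : ∀ t j, ∑ r, ∑ q, x t j r q = 1) : ∃ φ σ, x = scheduleIndicator φ σ := by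
  have hslot : ∀ t j, ∃ rq : R × Q, ∀ p, x t j p.1 p.2 = if p = rq then 1 else 0 :=
    fun t j => exists_eq_ite_of_sum_eq_one ((Fintype.sum_prod_type' _).trans (h t j))
  choose rq hrq using hslot
  refine ⟨fun j t => (rq t j).1, fun t j => (rq t j).2, ?_⟩
  ext t j r q
  simp [scheduleIndicator, hrq t j (r, q), Prod.ext_iff, eq_comm]

variable (φ : J → T → R) (σ : T → J → Q)

theorem sum_scheduleIndicator_slot [Fintype Q] (t : T) (j : J) (r : R) :
    ∑ q, scheduleIndicator φ σ t j r q = if φ j t = r then 1 else 0 := by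
  simp [scheduleIndicator, ite_and]

theorem sum_sum_scheduleIndicator_round [Fintype R] [Fintype Q] (t : T) (j : J) :
    ∑ r, ∑ q, scheduleIndicator φ σ t j r q = 1 := by
  simp [sum_scheduleIndicator_slot]

theorem sum_sum_scheduleIndicator_portfolio [Fintype J] [Fintype R] (t : T) (q : Q) :
    ∑ j, ∑ r, scheduleIndicator φ σ t j r q = #{j | σ t j = q} := by
  rw [card_filter]
  simp [scheduleIndicator, ite_and]

theorem sum_sum_scheduleIndicator_room [Fintype T] [Fintype Q] (j : J) (r : R) :
    ∑ t, ∑ q, scheduleIndicator φ σ t j r q = #{t | φ j t = r} := by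
  rw [card_filter]
  simp [sum_scheduleIndicator_slot]

theorem sum_sum_scheduleIndicator_problem [Fintype T] [Fintype Q] [DecidableEq P]
    {pq : T → Q → P} {π : J → T → P} (hπ : ∀ t j, pq t (σ t j) = π j t)
    (j : J) (r : R) (ℓ : P) :
    ∑ t, ∑ q, (if pq t q = ℓ then scheduleIndicator φ σ t j r q else 0) =
      #{t | φ j t = r ∧ π j t = ℓ} := by
  rw [card_filter]
  refine sum_congr rfl fun t _ => ?_
  rw [sum_eq_single (σ t j) (fun q _ hq => by simp [scheduleIndicator, Ne.symm hq])
    (by simp)]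
  simp only [scheduleIndicator, hπ, and_true]
  split_ifs <;> simp_all

end ScheduleIndicator

section RoomProblems

variable {T J R P : Type*} [Fintype T] [DecidableEq R] [DecidableEq P]
  {π : J → T → P} {φ : J → T → R}

/-- The set `P(j, r)` of problems presented in room `r` in round `j`. -/
def roomProblems (π : J → T → P) (φ : J → T → R) (j : J) (r : R) : Finset P :=
  (univ.filter fun t => φ j t = r).image (π j)

theorem mem_roomProblems_iff_card_pos {j : J} {r : R} {ℓ : P} :
    ℓ ∈ roomProblems π φ j r ↔ 0 < #{t | φ j t = r ∧ π j t = ℓ} := by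
  simp [roomProblems, card_pos, filter_nonempty_iff]

theorem card_filter_le_one_iff_injOn_room :
    (∀ j r ℓ, #{t | φ j t = r ∧ π j t = ℓ} ≤ 1) ↔
      ∀ j t t', t ≠ t' → φ j t = φ j t' → π j t ≠ π j t' := by
  simp only [card_le_one, mem_filter, mem_univ, true_and]
  refine ⟨fun h j t t' hne hφ hπ => hne (h j _ _ t ⟨rfl, rfl⟩ t' ⟨hφ.symm, hπ.symm⟩),
    fun h j r ℓ t ht t' ht' => ?_⟩
  by_contra hne
  exact h j t t' hne (ht.1.trans ht'.1.symm) (ht.2.trans ht'.2.symm)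

theorem card_roomProblems (hroom : ∀ j t t', t ≠ t' → φ j t = φ j t' → π j t ≠ π j t')
    (j : J) (r : R) : #(roomProblems π φ j r) = #{t | φ j t = r} :=
  card_image_of_injOn fun t ht t' ht' hπ => by
    by_contra hne
    simp only [coe_filter, mem_univ, true_and, Set.mem_ofPred_eq] at ht ht'
    exact hroom j t t' hne (ht.trans ht'.symm) hπ

theorem exists_fairness_slack_iff [Fintype J] [Fintype R]
    (hroom : ∀ j r ℓ, #{t | φ j t = r ∧ π j t = ℓ} ≤ 1) :
    (∃ y : T → J → R → P → ℝ, (∀ t j r ℓ, 0 ≤ y t j r ℓ) ∧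
      (∀ t j r ℓ, ((if φ j t = r then 1 else 0 : ℕ) : ℝ) +
        (#{t' | φ j t' = r ∧ π j t' = ℓ} : ℝ) - 1 ≤ y t j r ℓ) ∧
      (∀ t ℓ, ∑ j, ∑ r, y t j r ℓ ≤ 1)) ↔
    ∀ t ℓ, #{j | ℓ ∈ roomProblems π φ j (φ j t)} ≤ 1 := by
  constructor
  · rintro ⟨y, hy0, hy, hsum⟩ t ℓ
    have hround : ∀ j,
        (if ℓ ∈ roomProblems π φ j (φ j t) then 1 else 0 : ℝ) ≤ ∑ r, y t j r ℓ := by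
      intro j
      split_ifs with hℓ
      · have hcard : (1 : ℝ) ≤ #{t' | φ j t' = φ j t ∧ π j t' = ℓ} := by
          exact_mod_cast mem_roomProblems_iff_card_pos.mp hℓ
        have := hy t j (φ j t) ℓ
        rw [if_pos rfl, Nat.cast_one] at this
        calc (1 : ℝ) ≤ y t j (φ j t) ℓ := by linarith
          _ ≤ ∑ r, y t j r ℓ := single_le_sum (fun r _ => hy0 t j r ℓ) (mem_univ _)
      · exact sum_nonneg fun r _ => hy0 t j r ℓ
    have : (#{j | ℓ ∈ roomProblems π φ j (φ j t)} : ℝ) ≤ 1 := by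
      rw [card_filter, Nat.cast_sum]
      push_cast
      exact (sum_le_sum fun j _ => hround j).trans (hsum t ℓ)
    exact_mod_cast this
  · intro hfair
    refine ⟨fun t j r ℓ => if φ j t = r ∧ ℓ ∈ roomProblems π φ j r then 1 else 0,
      fun t j r ℓ => by positivity, fun t j r ℓ => ?_, fun t ℓ => ?_⟩
    · have hc : (#{t' | φ j t' = r ∧ π j t' = ℓ} : ℝ) ≤ 1 := mod_cast hroom j r ℓ
      by_cases hℓ : ℓ ∈ roomProblems π φ j r
      · split_ifs <;> simp_all
      · have : #{t' | φ j t' = r ∧ π j t' = ℓ} = 0 := by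
          simpa [mem_roomProblems_iff_card_pos] using hℓ
        split_ifs <;> simp_all
    · simp only [ite_and, sum_ite_eq, mem_univ, if_true, sum_boole]
      exact_mod_cast hfair t ℓ

theorem card_union_roomProblems_eq_iff {π : Fin 3 → T → P} {φ : Fin 3 → T → R}
    {size : R → ℕ} (hroom : ∀ j t t', t ≠ t' → φ j t = φ j t' → π j t ≠ π j t')
    (hsize : ∀ j r, #{t | φ j t = r} = size r) (t : T) :
    #(roomProblems π φ 0 (φ 0 t) ∪ roomProblems π φ 1 (φ 1 t) ∪
        roomProblems π φ 2 (φ 2 t)) = size (φ 0 t) + size (φ 1 t) + size (φ 2 t) ↔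
      ∀ ℓ, #{j | ℓ ∈ roomProblems π φ j (φ j t)} ≤ 1 := by
  have hsum : ∑ j, #(roomProblems π φ j (φ j t)) =
      size (φ 0 t) + size (φ 1 t) + size (φ 2 t) := by
    simp [card_roomProblems hroom, hsize, Fin.sum_univ_three]
  have := card_biUnion_univ_eq_sum_card_iff fun j => roomProblems π φ j (φ j t)
  rwa [← Fin.union_three_eq_biUnion, hsum] at this

end RoomProblems

theorem ilp_strongly_fair_iff_strongly_fair_schedule_general
    (n m s : ℕ) (size : Fin s → ℕ)
    (pq : Fin n → Fin 3 → Fin m) (hpq : ∀ i, Function.Injective (pq i)) :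
    (∃ (x : Fin n → Fin 3 → Fin s → Fin 3 → ℕ)
       (y : Fin n → Fin 3 → Fin s → Fin m → ℝ),
      (∀ i j k q, x i j k q = 0 ∨ x i j k q = 1) ∧
      (∀ (i : Fin n) (q : Fin 3), ∑ j : Fin 3, ∑ k : Fin s, x i j k q = 1) ∧
      (∀ (i : Fin n) (j : Fin 3), ∑ k : Fin s, ∑ q : Fin 3, x i j k q = 1) ∧
      (∀ (j : Fin 3) (k : Fin s), ∑ i : Fin n, ∑ q : Fin 3, x i j k q = size k) ∧
      (∀ (j : Fin 3) (k : Fin s) (ℓ : Fin m),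
        ∑ i : Fin n, ∑ q : Fin 3, (if pq i q = ℓ then x i j k q else 0) ≤ 1) ∧
      (∀ i j k ℓ, 0 ≤ y i j k ℓ) ∧
      (∀ (i : Fin n) (j : Fin 3) (k : Fin s) (ℓ : Fin m),
        ((∑ w : Fin 3, x i j k w : ℕ) : ℝ) +
          ((∑ α : Fin n, ∑ q : Fin 3, (if pq α q = ℓ then x α j k q else 0) : ℕ) : ℝ)
          - 1 ≤ y i j k ℓ) ∧
      (∀ (i : Fin n) (ℓ : Fin m), ∑ j : Fin 3, ∑ k : Fin s, y i j k ℓ ≤ 1))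
    ↔
    (∃ (π : Fin 3 → Fin n → Fin m) (φ : Fin 3 → Fin n → Fin s),
      (∀ i : Fin n, ({π 0 i, π 1 i, π 2 i} : Finset (Fin m))
        = {pq i 0, pq i 1, pq i 2}) ∧
      (∀ (j : Fin 3) (i i' : Fin n), i ≠ i' → φ j i = φ j i' → π j i ≠ π j i') ∧
      (∀ (j : Fin 3) (k : Fin s),
        (Finset.univ.filter (fun i => φ j i = k)).card = size k) ∧
      (∀ i : Fin n,
        (((Finset.univ.filter (fun i' => φ 0 i' = φ 0 i)).image (π 0)) ∪
          ((Finset.univ.filter (fun i' => φ 1 i' = φ 1 i)).image (π 1)) ∪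
          ((Finset.univ.filter (fun i' => φ 2 i' = φ 2 i)).image (π 2))).card
          = size (φ 0 i) + size (φ 1 i) + size (φ 2 i))) := by
  constructor
  · rintro ⟨x, y, -, hportfolio, hround, hsize, hroom, hy0, hy, hysum⟩
    obtain ⟨φ, σ, rfl⟩ := exists_eq_scheduleIndicator hround
    set π : Fin 3 → Fin n → Fin m := fun j i => pq i (σ i j)
    have hπ : ∀ i j, pq i (σ i j) = π j i := fun _ _ => rfl
    simp only [sum_sum_scheduleIndicator_portfolio] at hportfolio
    simp only [sum_sum_scheduleIndicator_room] at hsize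
    simp only [sum_scheduleIndicator_slot, sum_sum_scheduleIndicator_problem φ σ hπ]
      at hroom hy
    have hinj := card_filter_le_one_iff_injOn_room.mp hroom
    refine ⟨π, φ, fun i => ?_, hinj, hsize, fun i => ?_⟩
    · have := (image_univ_eq_iff_exists_bijective_comp_eq (hpq i)).mpr
        ⟨σ i, bijective_iff_card_fiber_eq_one.mpr (hportfolio i), hπ i⟩
      rwa [image_univ_fin_three, image_univ_fin_three] at this
    · exact (card_union_roomProblems_eq_iff hinj hsize i).mpr
        ((exists_fairness_slack_iff hroom).mp ⟨y, hy0, hy, hysum⟩ i)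
  · rintro ⟨π, φ, hportfolio, hinj, hsize, hfair⟩
    have hσ : ∀ i, ∃ σ : Fin 3 → Fin 3, Bijective σ ∧ ∀ j, pq i (σ j) = π j i := by
      intro i
      rw [← image_univ_eq_iff_exists_bijective_comp_eq (hpq i), image_univ_fin_three,
        image_univ_fin_three]
      exact hportfolio i
    choose σ hσ hπ using hσ
    have hroom := card_filter_le_one_iff_injOn_room.mpr hinj
    obtain ⟨y, hy0, hy, hysum⟩ := (exists_fairness_slack_iff hroom).mpr fun i =>
      (card_union_roomProblems_eq_iff hinj hsize i).mp (hfair i)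
    refine ⟨scheduleIndicator φ σ, y, fun i j k q => (ite_eq_or_eq _ _ _).symm,
      fun i q => (sum_sum_scheduleIndicator_portfolio φ σ i q).trans
        (bijective_iff_card_fiber_eq_one.mp (hσ i) q),
      sum_sum_scheduleIndicator_round φ σ,
      fun j k => (sum_sum_scheduleIndicator_room φ σ j k).trans (hsize j k),
      fun j k ℓ => (sum_sum_scheduleIndicator_problem φ σ hπ j k ℓ).trans_le (hroom j k ℓ),
      hy0, fun i j k ℓ => ?_, hysum⟩
    rw [sum_scheduleIndicator_slot, sum_sum_scheduleIndicator_problem φ σ hπ]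
    exact hy i j k ℓ

/-- A binary vector `x` satisfying the feasibility constraints (2)–(5) together with
nonnegative reals `y` satisfying (7) and (8) exists if and only if a strongly fair
schedule exists. -/
theorem ilp_strongly_fair_iff_strongly_fair_schedule
    (n m s : ℕ) (size : Fin s → ℕ) (hsize : ∀ k, size k = 3 ∨ size k = 4)
    (pq : Fin n → Fin 3 → Fin m) (hpq : ∀ i, Function.Injective (pq i)) :
    (∃ (x : Fin n → Fin 3 → Fin s → Fin 3 → ℕ)
       (y : Fin n → Fin 3 → Fin s → Fin m → ℝ),
      (∀ i j k q, x i j k q = 0 ∨ x i j k q = 1) ∧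
      (∀ (i : Fin n) (q : Fin 3), ∑ j : Fin 3, ∑ k : Fin s, x i j k q = 1) ∧
      (∀ (i : Fin n) (j : Fin 3), ∑ k : Fin s, ∑ q : Fin 3, x i j k q = 1) ∧
      (∀ (j : Fin 3) (k : Fin s), ∑ i : Fin n, ∑ q : Fin 3, x i j k q = size k) ∧
      (∀ (j : Fin 3) (k : Fin s) (ℓ : Fin m),
        ∑ i : Fin n, ∑ q : Fin 3, (if pq i q = ℓ then x i j k q else 0) ≤ 1) ∧
      (∀ i j k ℓ, 0 ≤ y i j k ℓ) ∧
      (∀ (i : Fin n) (j : Fin 3) (k : Fin s) (ℓ : Fin m),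
        ((∑ w : Fin 3, x i j k w : ℕ) : ℝ) +
          ((∑ α : Fin n, ∑ q : Fin 3, (if pq α q = ℓ then x α j k q else 0) : ℕ) : ℝ)
          - 1 ≤ y i j k ℓ) ∧
      (∀ (i : Fin n) (ℓ : Fin m), ∑ j : Fin 3, ∑ k : Fin s, y i j k ℓ ≤ 1))
    ↔
    (∃ (π : Fin 3 → Fin n → Fin m) (φ : Fin 3 → Fin n → Fin s),
      (∀ i : Fin n, ({π 0 i, π 1 i, π 2 i} : Finset (Fin m))
        = {pq i 0, pq i 1, pq i 2}) ∧
      (∀ (j : Fin 3) (i i' : Fin n), i ≠ i' → φ j i = φ j i' → π j i ≠ π j i') ∧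
      (∀ (j : Fin 3) (k : Fin s),
        (Finset.univ.filter (fun i => φ j i = k)).card = size k) ∧
      (∀ i : Fin n,
        (((Finset.univ.filter (fun i' => φ 0 i' = φ 0 i)).image (π 0)) ∪
          ((Finset.univ.filter (fun i' => φ 1 i' = φ 1 i)).image (π 1)) ∪
          ((Finset.univ.filter (fun i' => φ 2 i' = φ 2 i)).image (π 2))).card
          = size (φ 0 i) + size (φ 1 i) + size (φ 2 i))) :=
  ilp_strongly_fair_iff_strongly_fair_schedule_general n m s size pq hpq
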